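/- Let (K, θ) be a (−ε)-quadratic form on a f.g. free Λ-module K with nonsingular symmetrization λ = θ − εθ* : K ≅ K*. Then t = (α, β, ν̄) with α = λ* : K → K*, β = 1_K, and ν̄ = [ελ^{−1}] ∈ Q_{−ε}(K*) is a flip-isomorphism of the boundary formation z = ∂(K, θ) = (K ←1 K →λ K*, θ): i.e. (a) αγ + α(ν̄ − εν̄*)*μ = εμβ, (b) α^{−*}μ = γβ, and (c) θ̄ + μ*ν̄μ + β*θ̄β = 0 ∈ Q_{−ε}(K) hold for γ = 1, μ = λ, θ̄ = θ. -/
import Mathlib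


/-- Let `(K, θ)` be a `(−ε)`-quadratic form on a f.g. free module
`K = Λ^n` whose symmetrization `λ = θ − εθ*` is nonsingular (with inverse `li`).
Then `t = (α, β, ν̄)` with `α = λ*`, `β = 1`, `ν = ελ⁻¹` is a flip-isomorphism of
the boundary formation `z = ∂(K,θ) = (K ←1 K →λ K*, θ)`:
(a) `αγ + α(ν̄ − εν̄*)*μ = εμβ`, (b) `α^{−*}μ = γβ`, and
(c) `θ̄ + μ*ν̄μ + β*θ̄β = 0 ∈ Q_{−ε}(K) = Hom/{κ + εκ*}`,
for `γ = 1`, `μ = λ`, `θ̄ = θ`.  (Matrices over the weakly finite ring `Λ` with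
involution, `f* = conjTranspose f`, `ε = ±1`; `α⁻¹ = li*`.) -/
theorem stmt_10 (Λ : Type) [Ring Λ] [StarRing Λ]
    (hwf : ∀ (k : ℕ) (a b : Matrix (Fin k) (Fin k) Λ), a * b = 1 → b * a = 1)
    (ε : Λ) (hε : ε = 1 ∨ ε = -1)
    (n : ℕ) (θ li : Matrix (Fin n) (Fin n) Λ)
    (hli1 : (θ - ε • θ.conjTranspose) * li = 1)
    (hli2 : li * (θ - ε • θ.conjTranspose) = 1) :
    ∀ lam α ν : Matrix (Fin n) (Fin n) Λ,
    lam = θ - ε • θ.conjTranspose →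
    α = lam.conjTranspose →
    ν = ε • li →
      -- α is invertible with inverse li*
      (α * li.conjTranspose = 1 ∧ li.conjTranspose * α = 1) ∧
      -- (a) αγ + α(ν − εν*)*μ = εμβ with γ = β = 1, μ = λ
      α + α * (ν - ε • ν.conjTranspose).conjTranspose * lam = ε • lam ∧
      -- (b) α^{−*}μ = γβ, i.e. (li*)* λ = 1
      (li.conjTranspose).conjTranspose * lam = 1 ∧
      -- (c) θ + λ*νλ + θ ≡ 0 modulo {κ + εκ*}
      (∃ κ : Matrix (Fin n) (Fin n) Λ,
        θ + lam.conjTranspose * ν * lam + θ = κ + ε • κ.conjTranspose) := by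

  rintro lam α ν rfl rfl rfl
  rcases hε with rfl | rfl
  · -- ε = 1 : lam = θ - θᴴ, lamᴴ = -lam, liᴴ = -li
    simp only [one_smul] at hli1 hli2 ⊢
    set L := θ - θ.conjTranspose with hLdef
    have hLT : L.conjTranspose = -L := by
      simp [hLdef, Matrix.conjTranspose_sub, neg_sub]
    have hliTL : li.conjTranspose * L = -1 := by
      have h1 : li.conjTranspose * L.conjTranspose = 1 := by
        rw [← Matrix.conjTranspose_mul, hli1, Matrix.conjTranspose_one]
      rw [hLT, Matrix.mul_neg] at h1
      exact neg_eq_iff_eq_neg.mp h1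
    have hliT : li.conjTranspose = -li := by
      calc li.conjTranspose = li.conjTranspose * (L * li) := by rw [hli1, mul_one]
        _ = (li.conjTranspose * L) * li := by rw [mul_assoc]
        _ = -li := by rw [hliTL]; simp
    refine ⟨⟨?_, ?_⟩, ?_, ?_, ⟨θ, ?_⟩⟩
    · rw [← Matrix.conjTranspose_mul, hli2, Matrix.conjTranspose_one]
    · rw [← Matrix.conjTranspose_mul, hli1, Matrix.conjTranspose_one]
    · have h3 : (li - li.conjTranspose).conjTranspose = -li - li := by
        simp [Matrix.conjTranspose_sub, hliT]
        abel
      rw [hLT, h3]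
      have e : -L + -L * (-li - li) * L = -L + ((L * li) * L + (L * li) * L) := by
        noncomm_ring
      rw [e, hli1]
      simp
    · rw [Matrix.conjTranspose_conjTranspose]; exact hli2
    · rw [hLT]
      have e : θ + -L * li * L + θ = θ + -((L * li) * L) + θ := by noncomm_ring
      rw [e, hli1, one_mul, hLdef]
      abel
  · -- ε = -1 : lam = θ + θᴴ, lamᴴ = lam, liᴴ = li
    simp only [neg_smul, one_smul, sub_neg_eq_add] at hli1 hli2 ⊢
    set L := θ + θ.conjTranspose with hLdef
    have hLT : L.conjTranspose = L := by
      simp [hLdef, Matrix.conjTranspose_add]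
      abel
    have hliTL : li.conjTranspose * L = 1 := by
      have h1 : li.conjTranspose * L.conjTranspose = 1 := by
        rw [← Matrix.conjTranspose_mul, hli1, Matrix.conjTranspose_one]
      rwa [hLT] at h1
    have hliT : li.conjTranspose = li := by
      calc li.conjTranspose = li.conjTranspose * (L * li) := by rw [hli1, mul_one]
        _ = (li.conjTranspose * L) * li := by rw [mul_assoc]
        _ = li := by rw [hliTL, one_mul]
    refine ⟨⟨?_, ?_⟩, ?_, ?_, ⟨θ, ?_⟩⟩
    · rw [← Matrix.conjTranspose_mul, hli2, Matrix.conjTranspose_one]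
    · rw [← Matrix.conjTranspose_mul, hli1, Matrix.conjTranspose_one]
    · have h3 : (-li + (-li).conjTranspose).conjTranspose = -li + -li := by
        simp [Matrix.conjTranspose_add, Matrix.conjTranspose_neg, hliT]
      rw [hLT]
      have e : L + L * ((-li + (-li).conjTranspose).conjTranspose) * L = -L := by
        rw [h3]
        have e2 : L + L * (-li + -li) * L = L + -((L * li) * L + (L * li) * L) := by
          noncomm_ring
        rw [e2, hli1]
        simp
      rw [e]
    · rw [Matrix.conjTranspose_conjTranspose]; exact hli2
    · rw [hLT]
      have e : θ + L * -li * L + θ = θ + -((L * li) * L) + θ := by noncomm_ring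
      rw [e, hli1, one_mul, hLdef]
      abel
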